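/- arXiv:1408.0716 — 2 statements merged into one kernel-verified Lean document; each statement's English description precedes it below -/
import Mathlib

section
/- Let λ ≤ 0 and ξ ≠ 0 be real constants, and let a₀ > 0 and a₁ ∈ ℝ. Then the initial value problem for the Emden equation a''(t) = −λ/a(t) + ξ²/a(t)³, a(0) = a₀, a'(0) = a₁, has a twice continuously differentiable solution a defined on all of ℝ with a(t) > 0 for every t ∈ ℝ; in particular the solution is global in time and never reaches zero. -/
/-!
Freeze the force below a small level `m > 0`, i.e. evaluate it at `max a m`. The frozen force is
bounded and globally Lipschitz, so the frozen equation has a global solution: Picard–Lindelöf on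
each `[-n, n]`, glued by uniqueness. The energy `a'² / 2 - ∫_{a₀}^{a} force` is conserved and the
force is nonnegative because `λ ≤ 0`, whereas `∫_m^{a₀} force ≥ ξ² / 2 * (m⁻² - a₀⁻²)` tends to
infinity as `m → 0`. For `m` small the solution therefore never reaches `m`, so it never sees the
freezing and solves the Emden equation itself.
-/

open Set Filter Topology NNReal

section GlobalExistence

variable {E : Type*} [NormedAddCommGroup E] [NormedSpace ℝ E]

theorem exists_isIntegralCurveOn_Icc_of_lipschitzWith_of_norm_le [CompleteSpace E] {v : E → E}
    {K : ℝ≥0} {L : ℝ} (hv : LipschitzWith K v) (hL : ∀ x, ‖v x‖ ≤ L) (x₀ : E) {T : ℝ}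
    (hT : 0 ≤ T) : ∃ γ : ℝ → E, γ 0 = x₀ ∧ IsIntegralCurveOn γ (fun _ ↦ v) (Icc (-T) T) := by
  have hPL : IsPicardLindelof (fun _ ↦ v) (tmin := -T) (tmax := T) ⟨0, by simp [hT]⟩ x₀
      (L.toNNReal * T.toNNReal) 0 L.toNNReal K :=
    .of_time_independent (fun x _ ↦ (hL x).trans (Real.le_coe_toNNReal L)) hv.lipschitzOnWith
      (by simp [hT])
  exact hPL.exists_eq_forall_mem_Icc_hasDerivWithinAt₀

theorem exists_isIntegralCurve_of_forall_isIntegralCurveOn_Icc {v : ℝ → E → E} {K : ℝ≥0}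
    (hv : ∀ t, LipschitzWith K (v t)) {x₀ : E}
    (h : ∀ n : ℕ, ∃ γ : ℝ → E, γ 0 = x₀ ∧ IsIntegralCurveOn γ v (Icc (-(n : ℝ)) n)) :
    ∃ γ : ℝ → E, γ 0 = x₀ ∧ IsIntegralCurve γ v := by
  choose γ hγ₀ hγ using h
  have hγ' (n : ℕ) (t : ℝ) (ht : |t| < n) : HasDerivAt (γ n) (v t (γ n t)) t := by
    rw [abs_lt] at ht
    exact (hγ n t ⟨ht.1.le, ht.2.le⟩).hasDerivAt (Icc_mem_nhds ht.1 ht.2)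
  have hγ_eq (j k : ℕ) (t : ℝ) (hj : |t| < j) (hk : |t| < k) : γ j t = γ k t := by
    have hr : |t| < min (j : ℝ) k := lt_min hj hk
    have hr₀ : (0 : ℝ) ∈ Ioo (-min (j : ℝ) k) (min (j : ℝ) k) := by
      rw [mem_Ioo, ← abs_lt, abs_zero]; exact (abs_nonneg t).trans_lt hr
    refine ODE_solution_unique_of_mem_Ioo (s := fun _ ↦ univ) (fun s _ ↦ (hv s).lipschitzOnWith)
      hr₀ (fun s hs ↦ ⟨hγ' j s ?_, trivial⟩) (fun s hs ↦ ⟨hγ' k s ?_, trivial⟩)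
      (by rw [hγ₀, hγ₀]) (abs_lt.mp hr)
    · exact (abs_lt.mpr hs).trans_le (min_le_left _ _)
    · exact (abs_lt.mpr hs).trans_le (min_le_right _ _)
  have hlt (t : ℝ) : |t| < (⌈|t|⌉₊ + 1 : ℕ) := by
    push_cast; linarith [Nat.le_ceil |t|]
  refine ⟨fun t ↦ γ (⌈|t|⌉₊ + 1) t, hγ₀ _, fun t ↦ ?_⟩
  have hnhds : {s : ℝ | |s| < (⌈|t|⌉₊ + 1 : ℕ)} ∈ 𝓝 t :=
    (isOpen_lt continuous_abs continuous_const).mem_nhds (hlt t)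
  exact (hγ' _ t (hlt t)).congr_of_eventuallyEq
    (eventually_of_mem hnhds fun s hs ↦ hγ_eq _ _ s (hlt s) hs)

end GlobalExistence

section SecondOrder

variable {g : ℝ → ℝ} {K : ℝ≥0} {C : ℝ}

theorem exists_isIntegralCurveOn_Icc_of_lipschitzWith_of_abs_le (hg : LipschitzWith K g)
    (hC : ∀ x, |g x| ≤ C) (p₀ : ℝ × ℝ) {T : ℝ} (hT : 0 ≤ T) :
    ∃ γ : ℝ → ℝ × ℝ, γ 0 = p₀ ∧
      IsIntegralCurveOn γ (fun _ p ↦ (p.2, g p.1)) (Icc (-T) T) := by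
  set B := |p₀.2| + C * T
  have hB : 0 ≤ B := by have := (abs_nonneg _).trans (hC 0); positivity
  -- the velocity is cut off at `±B`, a bound it cannot reach within time `T`
  have hclamp : LipschitzWith 1 fun y : ℝ ↦ max (-B) (min B y) :=
    (LipschitzWith.id.const_min B).const_max (-B)
  obtain ⟨γ, hγ₀, hγ⟩ := exists_isIntegralCurveOn_Icc_of_lipschitzWith_of_norm_le
    ((hclamp.comp LipschitzWith.prod_snd).prodMk (hg.comp LipschitzWith.prod_fst))
    (L := max B C) (fun p ↦ max_le_max (abs_le.mpr ⟨le_max_left _ _, max_le (by linarith)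
      (min_le_left _ _)⟩) (hC _)) p₀ hT
  have hvel (t : ℝ) (ht : t ∈ Icc (-T) T) : |(γ t).2| ≤ B := by
    have hdiff := (convex_Icc (-T) T).norm_image_sub_le_of_norm_hasDerivWithin_le
      (fun s hs ↦ hasFDerivAt_snd.comp_hasDerivWithinAt s (hγ s hs)) (fun s _ ↦ hC (γ s).1)
      ⟨neg_nonpos.mpr hT, hT⟩ ht
    simp only [Function.comp_apply, hγ₀, sub_zero, Real.norm_eq_abs] at hdiff
    have htri := abs_sub_abs_le_abs_sub (γ t).2 p₀.2
    have hCt : C * |t| ≤ C * T :=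
      mul_le_mul_of_nonneg_left (abs_le.mpr ht) ((abs_nonneg _).trans (hC 0))
    linarith
  refine ⟨γ, hγ₀, fun t ht ↦ ?_⟩
  have hvel := abs_le.mp (hvel t ht)
  convert hγ t ht using 2
  simp [min_eq_right hvel.2, max_eq_right hvel.1]

theorem exists_hasDerivAt_of_lipschitzWith_of_abs_le (hg : LipschitzWith K g)
    (hC : ∀ x, |g x| ≤ C) (x₀ v₀ : ℝ) :
    ∃ α β : ℝ → ℝ, α 0 = x₀ ∧ β 0 = v₀ ∧
      ∀ t, HasDerivAt α (β t) t ∧ HasDerivAt β (g (α t)) t := by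
  obtain ⟨γ, hγ₀, hγ⟩ := exists_isIntegralCurve_of_forall_isIntegralCurveOn_Icc
    (fun _ ↦ LipschitzWith.prod_snd.prodMk (hg.comp LipschitzWith.prod_fst))
    fun n ↦ exists_isIntegralCurveOn_Icc_of_lipschitzWith_of_abs_le hg hC (x₀, v₀) n.cast_nonneg
  exact ⟨fun t ↦ (γ t).1, fun t ↦ (γ t).2, by simp [hγ₀], by simp [hγ₀], fun t ↦
    ⟨hasFDerivAt_fst.comp_hasDerivAt (f := γ) t (hγ t),
      hasFDerivAt_snd.comp_hasDerivAt (f := γ) t (hγ t)⟩⟩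

end SecondOrder

section Energy

variable {g : ℝ → ℝ} {α β : ℝ → ℝ}

theorem sq_div_two_sub_integral_eq (hg : Continuous g) (hα : ∀ t, HasDerivAt α (β t) t)
    (hβ : ∀ t, HasDerivAt β (g (α t)) t) (t : ℝ) :
    β t ^ 2 / 2 - ∫ x in α 0..α t, g x = β 0 ^ 2 / 2 := by
  have hE (s : ℝ) : HasDerivAt (fun s ↦ β s ^ 2 / 2 - ∫ x in α 0..α s, g x) 0 s := by
    refine ((((hβ s).pow 2).div_const 2).sub
      ((hg.integral_hasStrictDerivAt (α 0) (α s)).hasDerivAt.comp s (hα s))).congr_deriv ?_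
    ring
  simpa using is_const_of_deriv_eq_zero (fun s ↦ (hE s).differentiableAt)
    (fun s ↦ (hE s).deriv) t 0

theorem lt_of_sq_div_two_lt_integral (hg : Continuous g) (hg₀ : ∀ x, 0 ≤ g x)
    (hα : ∀ t, HasDerivAt α (β t) t) (hβ : ∀ t, HasDerivAt β (g (α t)) t) {m : ℝ}
    (hE : β 0 ^ 2 / 2 < ∫ x in m..α 0, g x) (t : ℝ) : m < α t := by
  by_contra! hαt
  have hsplit : ∫ x in α t..α 0, g x = (∫ x in α t..m, g x) + ∫ x in m..α 0, g x :=
    (intervalIntegral.integral_add_adjacent_intervals (hg.intervalIntegrable _ _)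
      (hg.intervalIntegrable _ _)).symm
  have hnonneg : 0 ≤ ∫ x in α t..m, g x := intervalIntegral.integral_nonneg hαt fun x _ ↦ hg₀ x
  have henergy := sq_div_two_sub_integral_eq hg hα hβ t
  rw [intervalIntegral.integral_symm] at henergy
  nlinarith [sq_nonneg (β t)]

end Energy

theorem contDiff_two_of_hasDerivAt {F : Type*} [NormedAddCommGroup F] [NormedSpace ℝ F]
    {α β h : ℝ → F} (hα : ∀ t, HasDerivAt α (β t) t) (hβ : ∀ t, HasDerivAt β (h t) t)
    (hh : Continuous h) : ContDiff ℝ 2 α := by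
  have hα' : deriv α = β := funext fun t ↦ (hα t).deriv
  have hβ' : deriv β = h := funext fun t ↦ (hβ t).deriv
  rw [show (2 : WithTop ℕ∞) = 1 + 1 from rfl, contDiff_succ_iff_deriv, hα', contDiff_one_iff_deriv,
    hβ']
  exact ⟨fun t ↦ (hα t).differentiableAt, by simp, fun t ↦ (hβ t).differentiableAt, hh⟩

section EmdenForce

variable {lam ξ : ℝ}

noncomputable def emdenForce (lam ξ x : ℝ) : ℝ := -lam / x + ξ ^ 2 / x ^ 3

theorem emdenForce_nonneg (hlam : lam ≤ 0) {x : ℝ} (hx : 0 < x) : 0 ≤ emdenForce lam ξ x :=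
  add_nonneg (div_nonneg (neg_nonneg.mpr hlam) hx.le) (by positivity)

theorem emdenForce_antitoneOn (hlam : lam ≤ 0) : AntitoneOn (emdenForce lam ξ) (Ioi 0) :=
  fun _ hx _ _ hxy ↦ add_le_add (div_le_div_of_nonneg_left (neg_nonneg.mpr hlam) hx hxy)
    (div_le_div_of_nonneg_left (sq_nonneg ξ) (pow_pos hx 3) (pow_le_pow_left₀ hx.le hxy 3))

theorem hasDerivAt_emdenForce {x : ℝ} (hx : x ≠ 0) :
    HasDerivAt (emdenForce lam ξ) (lam / x ^ 2 - 3 * ξ ^ 2 / x ^ 4) x := by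
  have h := ((hasDerivAt_inv hx).const_mul (-lam)).add
    (((hasDerivAt_pow 3 x).inv (pow_ne_zero 3 hx)).const_mul (ξ ^ 2))
  have hf : emdenForce lam ξ = fun y ↦ -lam * y⁻¹ + ξ ^ 2 * (y ^ 3)⁻¹ := by
    funext y
    simp only [emdenForce, div_eq_mul_inv]
  rw [hf]
  refine h.congr_deriv ?_
  norm_num
  field_simp
  ring

theorem exists_lipschitzWith_emdenForce_max {m : ℝ} (hm : 0 < m) :
    ∃ K, LipschitzWith K fun x ↦ emdenForce lam ξ (max x m) := by
  have hbound (x : ℝ) (hx : m ≤ x) :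
      |lam / x ^ 2 - 3 * ξ ^ 2 / x ^ 4| ≤ |lam| / m ^ 2 + 3 * ξ ^ 2 / m ^ 4 := by
    have hx₀ : 0 < x := hm.trans_le hx
    calc |lam / x ^ 2 - 3 * ξ ^ 2 / x ^ 4| ≤ |lam / x ^ 2| + |3 * ξ ^ 2 / x ^ 4| := abs_sub _ _
      _ = |lam| / x ^ 2 + 3 * ξ ^ 2 / x ^ 4 := by
        rw [abs_div, abs_div, abs_of_pos (pow_pos hx₀ 2), abs_of_pos (pow_pos hx₀ 4),
          abs_of_nonneg (by positivity : (0 : ℝ) ≤ 3 * ξ ^ 2)]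
      _ ≤ |lam| / m ^ 2 + 3 * ξ ^ 2 / m ^ 4 := by gcongr
  have hOn :
      LipschitzOnWith (|lam| / m ^ 2 + 3 * ξ ^ 2 / m ^ 4).toNNReal (emdenForce lam ξ) (Ici m) :=
    (convex_Ici m).lipschitzOnWith_of_nnnorm_hasDerivWithin_le
      (fun x hx ↦ (hasDerivAt_emdenForce (hm.trans_le hx).ne').hasDerivWithinAt)
      fun x hx ↦ by
        rw [← NNReal.coe_le_coe, coe_nnnorm, Real.coe_toNNReal _ (by positivity)]
        exact hbound x hx
  exact ⟨_, lipschitzOnWith_univ.mp <|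
    hOn.comp (LipschitzWith.id.max_const m).lipschitzOnWith fun x _ ↦ le_max_right x m⟩

theorem tendsto_integral_emdenForce_nhdsGT_zero (hlam : lam ≤ 0) (hξ : ξ ≠ 0) {a₀ : ℝ}
    (ha₀ : 0 < a₀) : Tendsto (fun m ↦ ∫ x in m..a₀, emdenForce lam ξ x) (𝓝[>] 0) atTop := by
  have hlower (m : ℝ) (hm : m ∈ Ioc 0 a₀) :
      ξ ^ 2 / 2 * (m⁻¹ ^ 2 - a₀⁻¹ ^ 2) ≤ ∫ x in m..a₀, emdenForce lam ξ x := by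
    have hpos (x : ℝ) (hx : x ∈ uIcc m a₀) : 0 < x := by
      rw [uIcc_of_le hm.2] at hx
      exact hm.1.trans_le hx.1
    have hcont : ContinuousOn (fun x : ℝ ↦ ξ ^ 2 / x ^ 3) (uIcc m a₀) :=
      continuousOn_const.div (continuousOn_pow 3) fun x hx ↦ (pow_pos (hpos x hx) 3).ne'
    have hprim : ∫ x in m..a₀, ξ ^ 2 / x ^ 3 = ξ ^ 2 / 2 * (m⁻¹ ^ 2 - a₀⁻¹ ^ 2) := by
      rw [intervalIntegral.integral_eq_sub_of_hasDerivAt (f := fun x ↦ -(ξ ^ 2 / 2) * x⁻¹ ^ 2)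
        (fun x hx ↦ ?_) (hcont.intervalIntegrable)]
      · ring
      · have hx := (hpos x hx).ne'
        refine (((hasDerivAt_inv hx).pow 2).const_mul (-(ξ ^ 2 / 2))).congr_deriv ?_
        norm_num
        field_simp
    rw [← hprim]
    refine intervalIntegral.integral_mono_on hm.2 hcont.intervalIntegrable ?_ fun x hx ↦ ?_
    · exact (HasDerivAt.continuousOn fun x hx ↦
        hasDerivAt_emdenForce (hpos x hx).ne').intervalIntegrable
    · exact le_add_of_nonneg_left (div_nonneg (neg_nonneg.mpr hlam) (hm.1.trans_le hx.1).le)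
  refine tendsto_atTop_mono' _ (eventually_of_mem (Ioc_mem_nhdsGT ha₀) hlower) ?_
  refine Tendsto.const_mul_atTop (by positivity) (tendsto_atTop_add_const_right _ _ ?_)
  exact (tendsto_pow_atTop two_ne_zero).comp tendsto_inv_nhdsGT_zero

end EmdenForce

/-- For `λ ≤ 0`, `ξ ≠ 0`, `a₀ > 0`, `a₁ ∈ ℝ`, the initial value problem for the
Emden equation `a'' = −λ/a + ξ²/a³`, `a(0) = a₀`, `a'(0) = a₁` has a twice continuously
differentiable solution defined on all of `ℝ` which stays positive: the solution is global
in time and never reaches zero. -/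
theorem emden_global_existence_nonpositive_lambda
    (lam ξ a₀ a₁ : ℝ) (hlam : lam ≤ 0) (hξ : ξ ≠ 0) (ha₀ : 0 < a₀) :
    ∃ a : ℝ → ℝ,
      ContDiff ℝ 2 a ∧
      (∀ t, 0 < a t) ∧
      (∀ t, deriv (deriv a) t = -lam / a t + ξ ^ 2 / (a t) ^ 3) ∧
      a 0 = a₀ ∧ deriv a 0 = a₁ := by
  obtain ⟨m, hbarrier, hm, hma⟩ :=
    (((tendsto_integral_emdenForce_nhdsGT_zero hlam hξ ha₀).eventually
      (eventually_gt_atTop (a₁ ^ 2 / 2))).and (Ioo_mem_nhdsGT ha₀)).exists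
  set g := fun x ↦ emdenForce lam ξ (max x m)
  have hg₀ (x : ℝ) : 0 ≤ g x := emdenForce_nonneg hlam (hm.trans_le (le_max_right x m))
  have hgC (x : ℝ) : |g x| ≤ emdenForce lam ξ m := by
    rw [abs_of_nonneg (hg₀ x)]
    exact emdenForce_antitoneOn hlam hm (hm.trans_le (le_max_right x m)) (le_max_right x m)
  obtain ⟨K, hgK⟩ := exists_lipschitzWith_emdenForce_max (lam := lam) (ξ := ξ) hm
  obtain ⟨α, β, hα₀, hβ₀, hαβ⟩ := exists_hasDerivAt_of_lipschitzWith_of_abs_le hgK hgC a₀ a₁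
  have hE : β 0 ^ 2 / 2 < ∫ x in m..α 0, g x := by
    rw [hα₀, hβ₀]
    refine hbarrier.trans_eq (intervalIntegral.integral_congr fun x hx ↦ ?_)
    rw [uIcc_of_le hma.le] at hx
    simp [g, max_eq_left hx.1]
  have hαm := lt_of_sq_div_two_lt_integral hgK.continuous hg₀ (fun t ↦ (hαβ t).1)
    (fun t ↦ (hαβ t).2) hE
  have hα' : deriv α = β := funext fun t ↦ (hαβ t).1.deriv
  refine ⟨α, contDiff_two_of_hasDerivAt (fun t ↦ (hαβ t).1) (fun t ↦ (hαβ t).2) ?_,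
    fun t ↦ hm.trans (hαm t), fun t ↦ ?_, hα₀, by rw [hα', hβ₀]⟩
  · exact hgK.continuous.comp (continuous_iff_continuousAt.2 fun t ↦ (hαβ t).1.continuousAt)
  · rw [hα', (hαβ t).2.deriv]
    simp [emdenForce, max_eq_left (hαm t).le]
end

section
/- Let K > 0, λ ∈ ℝ, ξ ≠ 0. Let a : ℝ → (0,∞) be twice continuously differentiable satisfying the Emden equation a''(t) = −λ/a(t) + ξ²/a(t)³, and let f : [0,∞) → ℝ be twice continuously differentiable with f'(0) = 0 satisfying the Liouville equation f''(s) + f'(s)/s + (2π/K)·e^{f(s)} = 2λ/K for s > 0. Define, with r = √(x²+y²), ρ(t,x,y) = e^{f(r/a(t))}/a(t)², u₁ = (a'(t)/a(t))·x − (ξ/a(t)²)·y, u₂ = (ξ/a(t)²)·x + (a'(t)/a(t))·y. Then at every point with r > 0 the two momentum equations hold with isothermal pressure P = Kρ and radial gravitational force: ρ·(∂u₁/∂t + u₁·∂u₁/∂x + u₂·∂u₁/∂y) + ∂(Kρ)/∂x + ρ·(x/r²)·2π·∫₀ʳ ρ(t,η)·η dη = 0, and ρ·(∂u₂/∂t +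 u₁·∂u₂/∂x + u₂·∂u₂/∂y) + ∂(Kρ)/∂y + ρ·(y/r²)·2π·∫₀ʳ ρ(t,η)·η dη = 0. -/
/-!
The velocity is linear, `u = M(t) (x, y)` with `M = (a'/a) I + (ξ/a²) J`, so its convective
acceleration is `(M' + M²) (x, y)`. The rotational parts cancel and, by the Emden equation,
`M' + M² = (a''/a - ξ²/a⁴) I = -(λ/a²) I`.
Multiplying the Liouville equation by `s` gives `(s f')' = s (2λ - 2π e^f)/K`, whence the first
integral `K s f'(s) + 2π ∫₀ˢ e^f σ dσ = λ s²`. After the substitution `η = a s` this says that the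
pressure gradient plus self-gravity equals `ρ (λ/a²) (x, y)`, which balances the acceleration.
-/

open Real Set

/-- The planar radius `r = √(x² + y²)`. -/
noncomputable def rad (x y : ℝ) : ℝ := Real.sqrt (x ^ 2 + y ^ 2)

theorem rad_comm (x y : ℝ) : rad x y = rad y x := by
  rw [rad, rad, add_comm]

theorem hasDerivAt_rad_left {x y : ℝ} (hr : 0 < rad x y) :
    HasDerivAt (fun χ => rad χ y) (x / rad x y) x := by
  refine (((hasDerivAt_pow 2 x).add_const (y ^ 2)).sqrt (Real.sqrt_pos.mp hr).ne').congr_deriv ?_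
  unfold rad at hr ⊢
  field_simp
  norm_num

theorem hasDerivAt_rad_right {x y : ℝ} (hr : 0 < rad x y) :
    HasDerivAt (fun υ => rad x υ) (y / rad x y) y := by
  simp only [rad_comm x] at hr ⊢
  exact hasDerivAt_rad_left hr

theorem mul_eq_integral_of_radial_laplacian_eq {f' f'' g : ℝ → ℝ}
    (hf'c : ContinuousOn f' (Ici 0)) (hgc : ContinuousOn g (Ici 0))
    (hf' : ∀ s ∈ Ioi (0 : ℝ), HasDerivAt f' (f'' s) s)
    (hode : ∀ s ∈ Ioi (0 : ℝ), f'' s + f' s / s = g s) {s : ℝ} (hs : 0 ≤ s) :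
    s * f' s = ∫ σ in (0 : ℝ)..s, σ * g σ := by
  have hIcc : Icc 0 s ⊆ Ici 0 := Icc_subset_Ici_self
  have hderiv : ∀ σ ∈ Ioo 0 s, HasDerivAt (fun σ => σ * f' σ) (σ * g σ) σ := by
    intro σ hσ
    refine ((hasDerivAt_id' σ).mul (hf' σ hσ.1)).congr_deriv ?_
    rw [← hode σ hσ.1]
    field_simp [hσ.1.ne']
    ring
  have hint : IntervalIntegrable (fun σ => σ * g σ) MeasureTheory.volume 0 s :=
    (continuousOn_id.mul (hgc.mono hIcc)).intervalIntegrable_of_Icc hs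
  rw [intervalIntegral.integral_eq_sub_of_hasDerivAt_of_le hs
    (continuousOn_id.mul (hf'c.mono hIcc)) hderiv hint]
  simp

theorem liouville_first_integral {K lam : ℝ} (hK : K ≠ 0) {f f' f'' : ℝ → ℝ}
    (hfc : ContinuousOn f (Ici 0)) (hf'c : ContinuousOn f' (Ici 0))
    (hf' : ∀ s ∈ Ioi (0 : ℝ), HasDerivAt f' (f'' s) s)
    (hode : ∀ s ∈ Ioi (0 : ℝ), f'' s + f' s / s + (2 * π / K) * exp (f s) = 2 * lam / K)
    {s : ℝ} (hs : 0 ≤ s) :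
    K * (s * f' s) + 2 * π * ∫ σ in (0 : ℝ)..s, exp (f σ) * σ = lam * s ^ 2 := by
  have hgc : ContinuousOn (fun σ => 2 * lam / K - (2 * π / K) * exp (f σ)) (Ici 0) :=
    continuousOn_const.sub (continuousOn_const.mul hfc.rexp)
  have hint : IntervalIntegrable (fun σ => exp (f σ) * σ) MeasureTheory.volume 0 s :=
    ((hfc.mono Icc_subset_Ici_self).rexp.mul continuousOn_id).intervalIntegrable_of_Icc hs
  have hflux := mul_eq_integral_of_radial_laplacian_eq hf'c hgc hf'
    (fun σ hσ => by rw [← hode σ hσ]; ring) hs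
  have hsplit : (fun σ => σ * (2 * lam / K - (2 * π / K) * exp (f σ))) =
      fun σ => 2 * lam / K * σ - 2 * π / K * (exp (f σ) * σ) := by
    ext σ; ring
  rw [hflux, hsplit,
    intervalIntegral.integral_sub (intervalIntegral.intervalIntegrable_id.const_mul _)
      (hint.const_mul _),
    intervalIntegral.integral_const_mul, intervalIntegral.integral_const_mul, integral_id]
  field_simp
  ring

theorem integral_comp_div_mul_self (φ : ℝ → ℝ) {A : ℝ} (hA : A ≠ 0) (r : ℝ) :
    ∫ η in (0 : ℝ)..r, φ (η / A) / A ^ 2 * η = ∫ σ in (0 : ℝ)..r / A, φ σ * σ := by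
  have hscale : (fun η => φ (η / A) / A ^ 2 * η) = fun η => A⁻¹ * (φ (η / A) * (η / A)) := by
    ext η; field_simp
  rw [hscale, intervalIntegral.integral_const_mul,
    intervalIntegral.integral_comp_div (fun σ => φ σ * σ) hA, zero_div, smul_eq_mul,
    ← mul_assoc, inv_mul_cancel₀ hA, one_mul]

theorem pressure_gravity_balance {K lam A x : ℝ} {f f' R : ℝ → ℝ} (hA : A ≠ 0) (hRx : R x ≠ 0)
    (hR : HasDerivAt R (x / R x) x) (hf : HasDerivAt f (f' (R x / A)) (R x / A))
    (hfirst : K * (R x / A * f' (R x / A)) + 2 * π * ∫ σ in (0 : ℝ)..R x / A, exp (f σ) * σ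
      = lam * (R x / A) ^ 2) :
    deriv (fun χ => K * (exp (f (R χ / A)) / A ^ 2)) x
      + exp (f (R x / A)) / A ^ 2 * (x / R x ^ 2)
        * (2 * π * ∫ η in (0 : ℝ)..R x, exp (f (η / A)) / A ^ 2 * η)
      = exp (f (R x / A)) / A ^ 2 * (lam / A ^ 2 * x) := by
  have hpressure : HasDerivAt (fun χ => K * (exp (f (R χ / A)) / A ^ 2)) _ x :=
    (((hf.comp x (hR.div_const A)).exp.div_const _).const_mul K)
  rw [hpressure.deriv,
    integral_comp_div_mul_self (fun σ => exp (f σ)) hA,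
    show 2 * π * ∫ σ in (0 : ℝ)..R x / A, exp (f σ) * σ = lam * (R x / A) ^ 2
      - K * (R x / A * f' (R x / A)) by linarith, Function.comp_apply]
  field_simp
  ring

section RotatingFlow

variable {a : ℝ → ℝ} {lam ξ t : ℝ} {u₁ u₂ : ℝ → ℝ → ℝ → ℝ}

theorem convective_acceleration_fst (ha : DifferentiableAt ℝ a t)
    (ha' : DifferentiableAt ℝ (deriv a) t) (hat : a t ≠ 0)
    (haode : deriv (deriv a) t = -lam / a t + ξ ^ 2 / a t ^ 3)
    (hu₁ : ∀ t x y, u₁ t x y = (deriv a t / a t) * x - (ξ / (a t) ^ 2) * y)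
    (hu₂ : ∀ t x y, u₂ t x y = (ξ / (a t) ^ 2) * x + (deriv a t / a t) * y) (x y : ℝ) :
    deriv (fun τ => u₁ τ x y) t + u₁ t x y * deriv (fun χ => u₁ t χ y) x
      + u₂ t x y * deriv (fun υ => u₁ t x υ) y = -lam / a t ^ 2 * x := by
  have hα : HasDerivAt (fun τ => deriv a τ / a τ) _ t := ha'.hasDerivAt.div ha.hasDerivAt hat
  have hβ : HasDerivAt (fun τ => ξ / a τ ^ 2) _ t :=
    (hasDerivAt_const t ξ).div (ha.hasDerivAt.pow 2) (pow_ne_zero 2 hat)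
  have hu : HasDerivAt (fun τ => deriv a τ / a τ * x - ξ / a τ ^ 2 * y) _ t :=
    (hα.mul_const x).sub (hβ.mul_const y)
  simp only [hu₁, hu₂]
  rw [hu.deriv]
  simp only [zero_mul, Nat.cast_ofNat, Nat.add_one_sub_one, pow_one, zero_sub,
    deriv_sub_const_fun, deriv_const_mul_id', deriv_const_sub', mul_neg]
  rw [haode]
  field_simp
  ring

theorem convective_acceleration_snd (ha : DifferentiableAt ℝ a t)
    (ha' : DifferentiableAt ℝ (deriv a) t) (hat : a t ≠ 0)
    (haode : deriv (deriv a) t = -lam / a t + ξ ^ 2 / a t ^ 3)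
    (hu₁ : ∀ t x y, u₁ t x y = (deriv a t / a t) * x - (ξ / (a t) ^ 2) * y)
    (hu₂ : ∀ t x y, u₂ t x y = (ξ / (a t) ^ 2) * x + (deriv a t / a t) * y) (x y : ℝ) :
    deriv (fun τ => u₂ τ x y) t + u₁ t x y * deriv (fun χ => u₂ t χ y) x
      + u₂ t x y * deriv (fun υ => u₂ t x υ) y = -lam / a t ^ 2 * y := by
  have hα : HasDerivAt (fun τ => deriv a τ / a τ) _ t := ha'.hasDerivAt.div ha.hasDerivAt hat
  have hβ : HasDerivAt (fun τ => ξ / a τ ^ 2) _ t :=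
    (hasDerivAt_const t ξ).div (ha.hasDerivAt.pow 2) (pow_ne_zero 2 hat)
  have hu : HasDerivAt (fun τ => ξ / a τ ^ 2 * x + deriv a τ / a τ * y) _ t :=
    (hβ.mul_const x).add (hα.mul_const y)
  simp only [hu₁, hu₂]
  rw [hu.deriv]
  simp only [zero_mul, Nat.cast_ofNat, Nat.add_one_sub_one, pow_one, zero_sub, deriv_add_const',
    deriv_const_mul_id', deriv_const_add']
  rw [haode]
  field_simp
  ring

end RotatingFlow

theorem momentum_equations_rotational_solution_general
    (K lam ξ : ℝ) (hK : 0 < K)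
    (a : ℝ → ℝ) (hareg : ContDiff ℝ 2 a) (hapos : ∀ t, 0 < a t)
    (haode : ∀ t, deriv (deriv a) t = -lam / a t + ξ ^ 2 / (a t) ^ 3)
    (f f' f'' : ℝ → ℝ)
    (hfc : ContinuousOn f (Set.Ici 0))
    (hf'c : ContinuousOn f' (Set.Ici 0))
    (hfd : ∀ s ∈ Set.Ioi (0 : ℝ), HasDerivAt f (f' s) s)
    (hfd' : ∀ s ∈ Set.Ioi (0 : ℝ), HasDerivAt f' (f'' s) s)
    (hfode : ∀ s ∈ Set.Ioi (0 : ℝ),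
      f'' s + f' s / s + (2 * π / K) * Real.exp (f s) = 2 * lam / K)
    (ρrad : ℝ → ℝ → ℝ) (ρ u₁ u₂ : ℝ → ℝ → ℝ → ℝ)
    (hρrad : ∀ t r, ρrad t r = Real.exp (f (r / a t)) / (a t) ^ 2)
    (hρ : ∀ t x y, ρ t x y = ρrad t (rad x y))
    (hu₁ : ∀ t x y, u₁ t x y = (deriv a t / a t) * x - (ξ / (a t) ^ 2) * y)
    (hu₂ : ∀ t x y, u₂ t x y = (ξ / (a t) ^ 2) * x + (deriv a t / a t) * y) :
    ∀ t x y, 0 < rad x y →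
      (ρ t x y * (deriv (fun τ => u₁ τ x y) t
            + u₁ t x y * deriv (fun χ => u₁ t χ y) x
            + u₂ t x y * deriv (fun υ => u₁ t x υ) y)
        + deriv (fun χ => K * ρ t χ y) x
        + ρ t x y * (x / (rad x y) ^ 2)
            * (2 * π * ∫ η in (0 : ℝ)..(rad x y), ρrad t η * η) = 0) ∧
      (ρ t x y * (deriv (fun τ => u₂ τ x y) t
            + u₁ t x y * deriv (fun χ => u₂ t χ y) x
            + u₂ t x y * deriv (fun υ => u₂ t x υ) y)
        + deriv (fun υ => K * ρ t x υ) y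
        + ρ t x y * (y / (rad x y) ^ 2)
            * (2 * π * ∫ η in (0 : ℝ)..(rad x y), ρrad t η * η) = 0) := by
  intro t x y hr
  have hat : a t ≠ 0 := (hapos t).ne'
  have ha : DifferentiableAt ℝ a t := hareg.differentiable two_ne_zero t
  have ha' : DifferentiableAt ℝ (deriv a) t := hareg.differentiable_deriv_two t
  have hs : 0 < rad x y / a t := div_pos hr (hapos t)
  have hfirst := liouville_first_integral hK.ne' hfc hf'c hfd' hfode hs.le
  have hbalance_x := pressure_gravity_balance (R := fun χ => rad χ y) hat hr.ne'
    (hasDerivAt_rad_left hr) (hfd _ hs) hfirst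
  have hbalance_y := pressure_gravity_balance (R := fun υ => rad x υ) hat hr.ne'
    (hasDerivAt_rad_right hr) (hfd _ hs) hfirst
  simp only [hρ, hρrad]
  exact ⟨by linear_combination exp (f (rad x y / a t)) / a t ^ 2
      * convective_acceleration_fst ha ha' hat (haode t) hu₁ hu₂ x y + hbalance_x,
    by linear_combination exp (f (rad x y / a t)) / a t ^ 2
      * convective_acceleration_snd ha ha' hat (haode t) hu₁ hu₂ x y + hbalance_y⟩

/-- With `a` a positive C² solution of the Emden equation
`a'' = −λ/a + ξ²/a³` and `f` a C² solution on `[0,∞)` of the Liouville equation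
`f'' + f'/s + (2π/K)e^f = 2λ/K` with `f'(0) = 0`, the density
`ρ(t,x,y) = e^{f(r/a(t))}/a(t)²` and velocity
`u₁ = (a'/a)x − (ξ/a²)y`, `u₂ = (ξ/a²)x + (a'/a)y` satisfy both momentum equations of the
2D isothermal Euler–Poisson system (pressure `P = Kρ`, radial self-gravity) wherever
`r > 0`. -/
theorem momentum_equations_rotational_solution
    (K lam ξ : ℝ) (hK : 0 < K) (hξ : ξ ≠ 0)
    (a : ℝ → ℝ) (hareg : ContDiff ℝ 2 a) (hapos : ∀ t, 0 < a t)
    (haode : ∀ t, deriv (deriv a) t = -lam / a t + ξ ^ 2 / (a t) ^ 3)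
    (f f' f'' : ℝ → ℝ)
    (hfc : ContinuousOn f (Set.Ici 0))
    (hf'c : ContinuousOn f' (Set.Ici 0))
    (hf''c : ContinuousOn f'' (Set.Ici 0))
    (hfd : ∀ s ∈ Set.Ioi (0 : ℝ), HasDerivAt f (f' s) s)
    (hfd' : ∀ s ∈ Set.Ioi (0 : ℝ), HasDerivAt f' (f'' s) s)
    (hf'0 : f' 0 = 0)
    (hfode : ∀ s ∈ Set.Ioi (0 : ℝ),
      f'' s + f' s / s + (2 * π / K) * Real.exp (f s) = 2 * lam / K)
    (ρrad : ℝ → ℝ → ℝ) (ρ u₁ u₂ : ℝ → ℝ → ℝ → ℝ)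
    (hρrad : ∀ t r, ρrad t r = Real.exp (f (r / a t)) / (a t) ^ 2)
    (hρ : ∀ t x y, ρ t x y = ρrad t (rad x y))
    (hu₁ : ∀ t x y, u₁ t x y = (deriv a t / a t) * x - (ξ / (a t) ^ 2) * y)
    (hu₂ : ∀ t x y, u₂ t x y = (ξ / (a t) ^ 2) * x + (deriv a t / a t) * y) :
    ∀ t x y, 0 < rad x y →
      (ρ t x y * (deriv (fun τ => u₁ τ x y) t
            + u₁ t x y * deriv (fun χ => u₁ t χ y) x
            + u₂ t x y * deriv (fun υ => u₁ t x υ) y)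
        + deriv (fun χ => K * ρ t χ y) x
        + ρ t x y * (x / (rad x y) ^ 2)
            * (2 * π * ∫ η in (0 : ℝ)..(rad x y), ρrad t η * η) = 0) ∧
      (ρ t x y * (deriv (fun τ => u₂ τ x y) t
            + u₁ t x y * deriv (fun χ => u₂ t χ y) x
            + u₂ t x y * deriv (fun υ => u₂ t x υ) y)
        + deriv (fun υ => K * ρ t x υ) y
        + ρ t x y * (y / (rad x y) ^ 2)
            * (2 * π * ∫ η in (0 : ℝ)..(rad x y), ρrad t η * η) = 0) :=
  momentum_equations_rotational_solution_general K lam ξ hK a hareg hapos haode f f' f'' hfc hf'c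
    hfd hfd' hfode ρrad ρ u₁ u₂ hρrad hρ hu₁ hu₂
end
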